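/- arXiv:1406.4075 — 2 statements merged into one kernel-verified Lean document; each statement's English description precedes it below -/
import Mathlib

section
/- Let T be a regular s-interval exchange transformation on [ℓ,r) with separation points γ_1 = ℓ < γ_2 < ⋯ < γ_s and images J_i = T(I_i) with left endpoints δ_i. Then Z(T) = [ℓ, max(γ_s, δ_{π(s)})) is right admissible for T, and every right admissible semi-interval for T is contained in Z(T); i.e., Z(T) is the largest right admissible semi-interval for T. -/
open Set MeasureTheory

noncomputable section

/-- Left endpoint `γ i` of the `i`-th exchanged semi-interval. -/
def sepPt {s : ℕ} (l : ℝ) (len : Fin s → ℝ) (i : Fin s) : ℝ :=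
  l + ∑ j ∈ Finset.univ.filter (fun j => j < i), len j

/-- Left endpoint `δ` of the image of the `i`-th exchanged semi-interval. -/
def imgPt {s : ℕ} (l : ℝ) (len : Fin s → ℝ) (π : Equiv.Perm (Fin s)) (i : Fin s) : ℝ :=
  l + ∑ j ∈ Finset.univ.filter (fun j => π j < π i), len j

/-- `T` is the `s`-interval exchange transformation on `[l,r)` with lengths `len`
and permutation `π`, extended by the identity outside `[l,r)`. -/
def IsIET (s : ℕ) (l r : ℝ) (len : Fin s → ℝ) (π : Equiv.Perm (Fin s))
    (T : Equiv.Perm ℝ) : Prop :=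
  l < r ∧ (∀ i, 0 < len i) ∧ (∑ i, len i) = r - l ∧
  (∀ z, z ∉ Set.Ico l r → T z = z) ∧
  ∀ i : Fin s, ∀ z ∈ Set.Ico (sepPt l len i) (sepPt l len i + len i),
    T z = z + (imgPt l len π i - sepPt l len i)

/-- The two-sided orbit `{T^n z : n ∈ ℤ}`. -/
def orbitZ (T : Equiv.Perm ℝ) (z : ℝ) : Set ℝ := {w | ∃ n : ℤ, (T ^ n) z = w}

/-- Regularity (idoc): the orbits of the nonzero separation points are infinite
and pairwise disjoint. -/
def IsRegularIET (s : ℕ) (l : ℝ) (len : Fin s → ℝ) (T : Equiv.Perm ℝ) : Prop :=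
  (∀ i : Fin s, (i : ℕ) ≠ 0 → (orbitZ T (sepPt l len i)).Infinite) ∧
  (∀ i j : Fin s, (i : ℕ) ≠ 0 → (j : ℕ) ≠ 0 → i ≠ j →
    Disjoint (orbitZ T (sepPt l len i)) (orbitZ T (sepPt l len j)))

/-- Minimality: every (two-sided) orbit of a point of `[l,r)` is dense in `[l,r)`. -/
def IsMinimalOn (T : Equiv.Perm ℝ) (l r : ℝ) : Prop :=
  ∀ z ∈ Set.Ico l r, Set.Ico l r ⊆ closure (orbitZ T z)

/-- First return time of `z` in `I` (defined via `sInf`; meaningful when `T` is minimal). -/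
def returnTime (T : Equiv.Perm ℝ) (I : Set ℝ) (z : ℝ) : ℕ :=
  sInf {n : ℕ | 0 < n ∧ (T ^ n) z ∈ I}

/-- The transformation induced by `T` on `I` (first-return map). -/
def inducedMap (T : Equiv.Perm ℝ) (I : Set ℝ) (z : ℝ) : ℝ :=
  (T ^ returnTime T I z) z

/-- The transformation induced by `T` on `[u,v)` is an interval exchange
transformation on `k` intervals with data `(lam, σ)`. -/
def InducedData (T : Equiv.Perm ℝ) (u v : ℝ) (k : ℕ) (lam : Fin k → ℝ)
    (σ : Equiv.Perm (Fin k)) : Prop :=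
  ∃ S : Equiv.Perm ℝ, IsIET k u v lam σ S ∧
    ∀ z ∈ Set.Ico u v, S z = inducedMap T (Set.Ico u v) z

/-- The semi-interval `[l,t)` is right admissible for `T`. -/
def RightAdmissible (s : ℕ) (l r : ℝ) (len : Fin s → ℝ) (T : Equiv.Perm ℝ)
    (t : ℝ) : Prop :=
  l < t ∧ t < r ∧ ∃ (i : Fin s) (k : ℤ), t = (T ^ k) (sepPt l len i) ∧
    (0 < k → ∀ h : ℤ, 0 < h → h < k → t < (T ^ h) (sepPt l len i)) ∧
    (k ≤ 0 → ∀ h : ℤ, k < h → h ≤ 0 → t < (T ^ h) (sepPt l len i))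

/-- `ρ⁺_{I,T}(z) = min {n > 0 : T^n z ∈ (u,v)}`. -/
def rhoPlusPt (T : Equiv.Perm ℝ) (u v z : ℝ) : ℕ :=
  sInf {n : ℕ | 0 < n ∧ (T ^ n) z ∈ Set.Ioo u v}

/-- `ρ⁻_{I,T}(z) = min {n ≥ 0 : T^{-n} z ∈ (u,v)}`. -/
def rhoMinusPt (T : Equiv.Perm ℝ) (u v z : ℝ) : ℕ :=
  sInf {n : ℕ | (T⁻¹ ^ n) z ∈ Set.Ioo u v}

/-- The set of neighbours `N_{I,T}(z)` of `z` with respect to `I = [u,v)` and `T`. -/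
def neighbours (T : Equiv.Perm ℝ) (u v z : ℝ) : Set ℝ :=
  {w | ∃ k : ℤ, -(rhoMinusPt T u v z : ℤ) ≤ k ∧ k < (rhoPlusPt T u v z : ℤ) ∧
    w = (T ^ k) z}

/-- The set of division points `Div(I,T)` of `I = [u,v)` with respect to `T`. -/
def divPoints (s : ℕ) (l : ℝ) (len : Fin s → ℝ) (T : Equiv.Perm ℝ)
    (u v : ℝ) : Set ℝ :=
  ⋃ i : Fin s, neighbours T u v (sepPt l len i)

/-- The semi-interval `[u,v) ⊆ [l,r)` is admissible for `T`. -/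
def Admissible (s : ℕ) (l r : ℝ) (len : Fin s → ℝ) (T : Equiv.Perm ℝ)
    (u v : ℝ) : Prop :=
  l ≤ u ∧ u < v ∧ v ≤ r ∧
  u ∈ divPoints s l len T u v ∪ {r} ∧ v ∈ divPoints s l len T u v ∪ {r}

/-- A bundled regular `s`-interval exchange transformation. -/
structure RIET (s : ℕ) where
  l : ℝ
  r : ℝ
  len : Fin s → ℝ
  perm : Equiv.Perm (Fin s)
  T : Equiv.Perm ℝ
  isIET : IsIET s l r len perm T
  isReg : IsRegularIET s l len T

/-- The right endpoint `max (γ_s, δ_{π(s)})` of `Z(T)`. -/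
def zPoint {s : ℕ} (X : RIET s) : ℝ :=
  if h : 0 < s then
    max (sepPt X.l X.len ⟨s - 1, by omega⟩)
      (imgPt X.l X.len X.perm (X.perm.symm ⟨s - 1, by omega⟩))
  else X.r

/-- The left endpoint `min (γ_2, δ_{π(2)})` of `Y(T)`. -/
def yPoint {s : ℕ} (X : RIET s) : ℝ :=
  if h : 1 < s then
    min (sepPt X.l X.len ⟨1, h⟩) (imgPt X.l X.len X.perm (X.perm.symm ⟨1, h⟩))
  else X.l

/-- `Y = ψ(X)`: one step of the right Rauzy induction. -/
def PsiStep {s : ℕ} (X Y : RIET s) : Prop :=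
  Y.l = X.l ∧ Y.r = zPoint X ∧
  ∀ z ∈ Set.Ico X.l (zPoint X), Y.T z = inducedMap X.T (Set.Ico X.l (zPoint X)) z

/-- `Y = φ(X)`: one step of the left Rauzy induction. -/
def PhiStep {s : ℕ} (X Y : RIET s) : Prop :=
  Y.l = yPoint X ∧ Y.r = X.r ∧
  ∀ z ∈ Set.Ico (yPoint X) X.r, Y.T z = inducedMap X.T (Set.Ico (yPoint X) X.r) z

/-- Equivalence of two `s`-interval exchange transformations: `(σ, mu)` is obtained
from `(π, lam)` by rescaling, possibly combined with the reversal `τ : i ↦ s - i + 1`. -/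
def IETEquiv (s : ℕ) (π σ : Equiv.Perm (Fin s)) (lam mu : Fin s → ℝ) : Prop :=
  (∃ c : ℝ, 0 < c ∧ σ = π ∧ ∀ i, mu i = c * lam i) ∨
  (∃ c : ℝ, 0 < c ∧ (∀ i, σ i = (π i).rev) ∧ ∀ i, mu i = c * lam i.rev)

/-- The subring `ℤ[√d]` of `ℝ`. -/
def Zsd (d : ℤ) : Set ℝ := {z | ∃ m n : ℤ, z = (m : ℝ) + (n : ℝ) * Real.sqrt d}

/-- `Ψ(z) = max (|m|,|n|)` for `z = m + n√d` (the representation being unique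
when `d ≥ 2` is squarefree). -/
def PsiNum (d : ℤ) (z : ℝ) : ℕ :=
  sInf {k : ℕ | ∃ m n : ℤ, z = (m : ℝ) + (n : ℝ) * Real.sqrt d ∧
    k = max m.natAbs n.natAbs}

/-- `Ψ(S) = max {Ψ(z) : z ∈ ∂S}`. -/
def PsiSet (d : ℤ) (S : Set ℝ) : ℕ := sSup (PsiNum d '' frontier S)

/-- The reduced complexity `Π(S) = |S| ⬝ Ψ(S)`. -/
def PiSet (d : ℤ) (S : Set ℝ) : ℝ := (volume S).toReal * PsiSet d S

/-- `S` belongs to the algebra `A([l,r))`: a nonempty finite union of semi-intervals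
of `[l,r)` with endpoints in `ℤ[√d]`. -/
def MemA (d : ℤ) (l r : ℝ) (S : Set ℝ) : Prop :=
  S.Nonempty ∧ S ⊆ Set.Ico l r ∧
  ∃ (k : ℕ) (a b : Fin k → ℝ), (∀ j, a j ∈ Zsd d ∧ b j ∈ Zsd d ∧ a j < b j) ∧
    S = ⋃ j, Set.Ico (a j) (b j)

/-- The interval exchange transformation with data `(l, r, len, π)` is defined over
`ℤ[√d]`: `l`, `r`, the separation points and the translation values lie in `ℤ[√d]`. -/
def DefinedOverZ (d : ℤ) (s : ℕ) (l r : ℝ) (len : Fin s → ℝ)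
    (π : Equiv.Perm (Fin s)) : Prop :=
  l ∈ Zsd d ∧ r ∈ Zsd d ∧
  ∀ i, sepPt l len i ∈ Zsd d ∧ (imgPt l len π i - sepPt l len i) ∈ Zsd d

/-- Maximal positive return time `ρ⁺(S)`. -/
def rhoPlusSet (T : Equiv.Perm ℝ) (S : Set ℝ) : ℕ :=
  sInf {n : ℕ | 1 ≤ n ∧ ⇑(T ^ n) '' S ⊆ ⋃ i ∈ Finset.range n, ⇑(T ^ i) '' S}

/-- Maximal negative return time `ρ⁻(S)`. -/
def rhoMinusSet (T : Equiv.Perm ℝ) (S : Set ℝ) : ℕ :=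
  sInf {m : ℕ | 1 ≤ m ∧ ⇑(T ^ m) '' S ⊆ ⋃ i ∈ Finset.range m, ⇑(T⁻¹ ^ i) '' S}

/-- Minimal positive return time `σ⁺(S)`. -/
def sigmaPlusSet (T : Equiv.Perm ℝ) (S : Set ℝ) : ℕ :=
  sInf {n : ℕ | 1 ≤ n ∧ (⇑(T ^ n) '' S ∩ S).Nonempty}

/-- Minimal negative return time `σ⁻(S)`. -/
def sigmaMinusSet (T : Equiv.Perm ℝ) (S : Set ℝ) : ℕ :=
  sInf {m : ℕ | 1 ≤ m ∧ (⇑(T⁻¹ ^ m) '' S ∩ S).Nonempty}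

/-- `D_{m,n}(T) = ⋃_{i=-m+1}^{n} T^i (Sep(T))`. -/
def Dmn (s : ℕ) (l : ℝ) (len : Fin s → ℝ) (T : Equiv.Perm ℝ) (m n : ℕ) : Set ℝ :=
  {w | ∃ (i : Fin s) (k : ℤ), -(m : ℤ) + 1 ≤ k ∧ k ≤ (n : ℤ) ∧
    w = (T ^ k) (sepPt l len i)}

/-- `[u,v)` belongs to `U(T) = ⋃_{m,n ≥ 1} U_{m,n}(T)`: it is one of the
semi-intervals into which `D_{m,n}(T)` partitions `[l,r)`. -/
def MemU (s : ℕ) (l r : ℝ) (len : Fin s → ℝ) (T : Equiv.Perm ℝ) (u v : ℝ) : Prop :=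
  ∃ m n : ℕ, 1 ≤ m ∧ 1 ≤ n ∧ u ∈ Dmn s l len T m n ∧
    (v ∈ Dmn s l len T m n ∨ v = r) ∧ ∀ w ∈ Dmn s l len T m n, w ∉ Set.Ioo u v

/-!
As `T γ_i = δ_i`, a right admissible endpoint `t = T^k γ_i` lies below `T^0 γ_i = γ_i` when
`k ≤ 0` and below `T^1 γ_i = δ_i` when `k > 0`. Since `γ_i` increases with `i` and `δ_i` with
`π(i)`, this gives `t ≤ max (γ_s, δ_{π(s)})`; and this maximum is itself right admissible,
with `k = 0` if it is `γ_s` and `k = 1` if it is `δ_{π(s)}`.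
-/

section SeparationPoints

variable {s : ℕ} (l : ℝ) {len : Fin s → ℝ}

lemma lt_sepPt_of_lt (hlen : ∀ i, 0 < len i) {i j : Fin s} (hij : i < j) :
    l < sepPt l len j :=
  lt_add_of_pos_right l (Finset.sum_pos (fun k _ => hlen k) ⟨i, by simpa using hij⟩)

lemma sepPt_mono (hlen : ∀ i, 0 ≤ len i) : Monotone (sepPt l len) := by
  intro i j hij
  refine add_le_add_right (Finset.sum_le_sum_of_subset_of_nonneg ?_ fun k _ _ => hlen k) l
  intro k hk
  simp only [Finset.mem_filter, Finset.mem_univ, true_and] at hk ⊢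
  exact hk.trans_le hij

lemma sepPt_add_le (hlen : ∀ i, 0 ≤ len i) (i : Fin s) :
    sepPt l len i + len i ≤ l + ∑ j, len j := by
  rw [sepPt, add_assoc, add_comm _ (len i), ← Finset.sum_insert (by simp)]
  exact add_le_add_right
    (Finset.sum_le_sum_of_subset_of_nonneg (Finset.subset_univ _) fun k _ _ => hlen k) l

lemma imgPt_eq_sepPt (π : Equiv.Perm (Fin s)) (i : Fin s) :
    imgPt l len π i = sepPt l (len ∘ π.symm) (π i) := by
  unfold imgPt sepPt
  congr 1
  exact Finset.sum_equiv π (by simp) (by simp)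

lemma imgPt_le_imgPt (hlen : ∀ i, 0 ≤ len i) (π : Equiv.Perm (Fin s)) {i j : Fin s}
    (hij : π i ≤ π j) : imgPt l len π i ≤ imgPt l len π j := by
  rw [imgPt_eq_sepPt, imgPt_eq_sepPt]
  exact sepPt_mono l (fun k => hlen _) hij

lemma imgPt_add_le (hlen : ∀ i, 0 ≤ len i) (π : Equiv.Perm (Fin s)) (i : Fin s) :
    imgPt l len π i + len i ≤ l + ∑ j, len j := by
  rw [imgPt_eq_sepPt]
  simpa [Equiv.sum_comp] using sepPt_add_le l (len := len ∘ π.symm) (fun k => hlen _) (π i)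

end SeparationPoints

namespace IsIET

variable {s : ℕ} {l r : ℝ} {len : Fin s → ℝ} {π : Equiv.Perm (Fin s)} {T : Equiv.Perm ℝ}

lemma apply_sepPt (hT : IsIET s l r len π T) (i : Fin s) :
    T (sepPt l len i) = imgPt l len π i := by
  rw [hT.2.2.2.2 i _ ⟨le_rfl, lt_add_of_pos_right _ (hT.2.1 i)⟩, add_sub_cancel]

lemma sepPt_lt (hT : IsIET s l r len π T) (i : Fin s) : sepPt l len i < r := by
  have := sepPt_add_le l (fun k => (hT.2.1 k).le) i
  linarith [hT.2.1 i, hT.2.2.1]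

lemma imgPt_lt (hT : IsIET s l r len π T) (i : Fin s) : imgPt l len π i < r := by
  have := imgPt_add_le l (fun k => (hT.2.1 k).le) π i
  linarith [hT.2.1 i, hT.2.2.1]

end IsIET

section RightAdmissible

variable {s : ℕ} {l r t : ℝ} {len : Fin s → ℝ} {T : Equiv.Perm ℝ}

lemma rightAdmissible_sepPt {i : Fin s} (hl : l < sepPt l len i) (hr : sepPt l len i < r) :
    RightAdmissible s l r len T (sepPt l len i) :=
  ⟨hl, hr, i, 0, by simp, fun h => absurd h (lt_irrefl 0), fun _ h h₁ h₂ => by omega⟩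

lemma rightAdmissible_apply_sepPt {i : Fin s} (hl : l < T (sepPt l len i))
    (hr : T (sepPt l len i) < r) : RightAdmissible s l r len T (T (sepPt l len i)) :=
  ⟨hl, hr, i, 1, by simp, fun _ h h₁ h₂ => by omega, fun h => by omega⟩

lemma RightAdmissible.exists_le (ht : RightAdmissible s l r len T t) :
    ∃ i, t ≤ sepPt l len i ∨ t ≤ T (sepPt l len i) := by
  obtain ⟨-, -, i, k, rfl, hpos, hnonpos⟩ := ht
  refine ⟨i, ?_⟩
  rcases le_or_gt k 0 with hk | hk
  · left
    rcases hk.lt_or_eq with hk | rfl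
    · simpa using (hnonpos hk.le 0 hk le_rfl).le
    · simp
  · right
    rcases (show (1 : ℤ) ≤ k by omega).eq_or_lt with rfl | hk₁
    · simp
    · simpa using (hpos hk 1 one_pos hk₁).le

end RightAdmissible

/-- `Z(T) = [l, max (γ_s, δ_{π(s)}))` is the largest right
admissible semi-interval for a regular `s`-interval exchange transformation `T`. -/
theorem zPoint_rightAdmissible_largest (s : ℕ) (hs : 2 ≤ s) (l r : ℝ)
    (len : Fin s → ℝ) (π : Equiv.Perm (Fin s)) (T : Equiv.Perm ℝ)
    (hIET : IsIET s l r len π T) :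
    RightAdmissible s l r len T
      (max (sepPt l len ⟨s - 1, by omega⟩) (imgPt l len π (π.symm ⟨s - 1, by omega⟩))) ∧
    ∀ t : ℝ, RightAdmissible s l r len T t →
      t ≤ max (sepPt l len ⟨s - 1, by omega⟩) (imgPt l len π (π.symm ⟨s - 1, by omega⟩)) := by
  set m : Fin s := ⟨s - 1, by omega⟩
  have hlen : ∀ i, 0 ≤ len i := fun i => (hIET.2.1 i).le
  have hlast : ∀ i, i ≤ m := fun i => by rw [Fin.le_def]; exact Nat.le_sub_one_of_lt i.isLt
  have hl : l < sepPt l len m := lt_sepPt_of_lt l hIET.2.1 (i := ⟨0, by omega⟩) (by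
    rw [Fin.lt_def]; dsimp [m]; omega)
  constructor
  · rcases le_total (imgPt l len π (π.symm m)) (sepPt l len m) with h | h
    · rw [max_eq_left h]
      exact rightAdmissible_sepPt hl (hIET.sepPt_lt m)
    · rw [max_eq_right h, ← hIET.apply_sepPt]
      refine rightAdmissible_apply_sepPt ?_ ?_ <;> rw [hIET.apply_sepPt]
      exacts [hl.trans_le h, hIET.imgPt_lt _]
  · intro t ht
    obtain ⟨i, hi | hi⟩ := ht.exists_le
    · exact le_max_of_le_left (hi.trans (sepPt_mono l hlen (hlast i)))
    · rw [hIET.apply_sepPt] at hi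
      exact le_max_of_le_right
        (hi.trans (imgPt_le_imgPt l hlen π (by simpa using hlast (π i))))

end
end

section
/- Let T be a minimal interval exchange transformation on [ℓ,r) defined over ℤ[√d]. There exists a constant C > 0 such that for every nonempty S ∈ A([ℓ,r)) one has ρ⁺(S) ≤ C·Ψ(S), ρ⁻(S) ≤ C·Ψ(S), σ⁺(S) ≤ C/|S| and σ⁻(S) ≤ C/|S| (in particular the minima defining ρ⁺(S) and ρ⁻(S) exist). -/
open Set MeasureTheory

noncomputable section

/-!
Every point of `S` returns to `S` within `N = O(Ψ(S))` steps. This gives `ρ⁺(S) ≤ N`, and also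
`ρ⁻(S) ≤ N`, because every window of `N` consecutive times then contains a return. To bound `N`,
suppose some point of `S` stays away from `S` for `N` steps. Poincaré recurrence, applied to an
interval of such points, produces a point whose first return takes longer than `N`; pulling it
back shows that for each `k ≤ N` some point of `[l, r)` first enters `S` at time `k`. The set of
these points is a union of cells of the partition of `[l, r)` by the points
`T^{-j}(∂S ∪ {l, r} ∪ Sep(T))`, `j ≤ k`, which lie in `ℤ[√d]` and have height `O(Ψ(S) + k)`.
Distinct points of `ℤ[√d]` of height `h` are `≳ 1/h` apart, so these disjoint sets contain
intervals of lengths `≳ 1/(Ψ(S) + k)`. Their total length is at most `r - l`, and the divergence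
of the harmonic series forces `N = O(Ψ(S))`. The bounds on `σ±` are the pigeonhole principle for
the measure-preserving map `T` on `[l, r)`.
-/

section QuadraticIntegers

variable {d : ℤ} {Q Q' : ℕ} {x y : ℝ}

lemma irrational_sqrt_of_squarefree (hd : 2 ≤ d) (hsf : Squarefree d) :
    Irrational (Real.sqrt d) := by
  rw [irrational_sqrt_intCast_iff_of_nonneg (by omega)]
  rintro ⟨k, hk⟩
  rcases Int.isUnit_iff.1 (hsf k ⟨1, by rw [hk, mul_one]⟩) with rfl | rfl <;> omega

def zsdBall (d : ℤ) (Q : ℕ) : Set ℝ :=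
  {x | ∃ m n : ℤ, m.natAbs ≤ Q ∧ n.natAbs ≤ Q ∧ x = m + n * Real.sqrt d}

lemma zsdBall_mono : Monotone (zsdBall d) := by
  rintro Q Q' hQ x ⟨m, n, hm, hn, rfl⟩
  exact ⟨m, n, hm.trans hQ, hn.trans hQ, rfl⟩

lemma finite_zsdBall (d : ℤ) (Q : ℕ) : (zsdBall d Q).Finite := by
  refine (((Set.finite_Icc (-(Q : ℤ)) Q).prod (Set.finite_Icc (-(Q : ℤ)) Q)).image
    fun p => (p.1 : ℝ) + p.2 * Real.sqrt d).subset ?_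
  rintro x ⟨m, n, hm, hn, rfl⟩
  exact ⟨(m, n), ⟨⟨by omega, by omega⟩, ⟨by omega, by omega⟩⟩, rfl⟩

lemma sub_mem_zsdBall (hx : x ∈ zsdBall d Q) (hy : y ∈ zsdBall d Q') :
    x - y ∈ zsdBall d (Q + Q') := by
  obtain ⟨m, n, hm, hn, rfl⟩ := hx
  obtain ⟨m', n', hm', hn', rfl⟩ := hy
  exact ⟨m - m', n - n', by omega, by omega, by push_cast; ring⟩

lemma eq_zero_of_mem_zsdBall_zero (hx : x ∈ zsdBall d 0) : x = 0 := by
  obtain ⟨m, n, hm, hn, rfl⟩ := hx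
  simp [Int.natAbs_eq_zero.1 (Nat.le_zero.1 hm), Int.natAbs_eq_zero.1 (Nat.le_zero.1 hn)]

lemma mem_zsdBall_psiNum (hx : x ∈ Zsd d) : x ∈ zsdBall d (PsiNum d x) := by
  obtain ⟨m, n, hmn⟩ := hx
  obtain ⟨m', n', hx', hP⟩ := Nat.sInf_mem (s := {k : ℕ | ∃ m n : ℤ,
    x = (m : ℝ) + (n : ℝ) * Real.sqrt d ∧ k = max m.natAbs n.natAbs}) ⟨_, m, n, hmn, rfl⟩
  have hP' : PsiNum d x = max m'.natAbs n'.natAbs := hP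
  exact ⟨m', n', hP' ▸ le_max_left _ _, hP' ▸ le_max_right _ _, hx'⟩

lemma exists_subset_zsdBall {F : Set ℝ} (hF : F.Finite) (hFZ : F ⊆ Zsd d) :
    ∃ Q, F ⊆ zsdBall d Q := by
  obtain ⟨Q, hQ⟩ := (hF.image (PsiNum d)).bddAbove
  exact ⟨Q, fun x hx => zsdBall_mono (hQ ⟨x, hx, rfl⟩) (mem_zsdBall_psiNum (hFZ hx))⟩

/-- Liouville-type gap: `x (m - n √d) = m² - d n²` is a nonzero integer, and the conjugate
factor is at most `Q (1 + √d)` in absolute value. -/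
lemma one_div_le_abs_of_mem_zsdBall (hirr : Irrational (Real.sqrt d)) (hx : x ∈ zsdBall d Q)
    (hx0 : x ≠ 0) : 1 / (Q * (1 + Real.sqrt d)) ≤ |x| := by
  obtain ⟨m, n, hm, hn, rfl⟩ := hx
  set x' : ℝ := m - n * Real.sqrt d
  have hx'0 : x' ≠ 0 := by
    rcases eq_or_ne n 0 with rfl | hn0
    · simpa [x'] using hx0
    · exact ((hirr.intCast_mul hn0).intCast_sub m).ne_zero
  have hnorm : (m + n * Real.sqrt d) * x' = ((m ^ 2 - d * n ^ 2 : ℤ) : ℝ) := by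
    have : Real.sqrt d ^ 2 = d := Real.sq_sqrt (by
      by_contra h
      exact hirr ⟨0, by simp [Real.sqrt_eq_zero'.2 (not_le.1 h).le]⟩)
    push_cast; linear_combination (-(n : ℝ) ^ 2) * this
  have hone : 1 ≤ |(m + n * Real.sqrt d) * x'| := by
    rw [hnorm, ← Int.cast_abs]
    exact_mod_cast Int.one_le_abs (by exact_mod_cast hnorm ▸ mul_ne_zero hx0 hx'0)
  have hm' : |(m : ℝ)| ≤ Q := by rw [← Int.cast_abs, Int.abs_eq_natAbs]; exact_mod_cast hm
  have hn' : |(n : ℝ)| ≤ Q := by rw [← Int.cast_abs, Int.abs_eq_natAbs]; exact_mod_cast hn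
  have hconj : |x'| ≤ Q * (1 + Real.sqrt d) := by
    calc |x'| ≤ |(m : ℝ)| + |(n : ℝ)| * Real.sqrt d := by
          simpa [abs_mul, abs_of_nonneg (Real.sqrt_nonneg _)] using
            abs_sub (m : ℝ) (n * Real.sqrt d)
      _ ≤ Q * (1 + Real.sqrt d) := by nlinarith [Real.sqrt_nonneg d]
  rw [abs_mul] at hone
  have hpos : 0 < (Q : ℝ) * (1 + Real.sqrt d) :=
    lt_of_lt_of_le (abs_pos.2 hx'0) hconj
  rw [div_le_iff₀ hpos]
  nlinarith [abs_nonneg (m + n * Real.sqrt d)]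

lemma one_div_le_sub_of_mem_zsdBall (hirr : Irrational (Real.sqrt d)) (hx : x ∈ zsdBall d Q)
    (hy : y ∈ zsdBall d Q) (hxy : x < y) : 1 / (2 * Q * (1 + Real.sqrt d)) ≤ y - x := by
  have := one_div_le_abs_of_mem_zsdBall hirr (sub_mem_zsdBall hy hx) (sub_ne_zero.2 hxy.ne')
  rw [abs_of_pos (sub_pos.2 hxy)] at this
  convert this using 3
  push_cast; ring

end QuadraticIntegers

section Cells

open Filter Topology

/-- `E` is a union of cells `[t, t')` of the partition of `ℝ` cut at the points of `D`. -/
def IsCellUnion (D E : Set ℝ) : Prop :=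
  ∀ x y, x ≤ y → (∀ t ∈ D, t ∉ Ioc x y) → (x ∈ E ↔ y ∈ E)

variable {D D' E : Set ℝ} {l r : ℝ}

lemma IsCellUnion.mono (hE : IsCellUnion D E) (hD : D ⊆ D') : IsCellUnion D' E :=
  fun x y hxy hxyD => hE x y hxy fun t ht => hxyD t (hD ht)

lemma isCellUnion_Ico (hl : l ∈ D) (hr : r ∈ D) : IsCellUnion D (Ico l r) := by
  refine fun x y hxy hxyD => ⟨fun hx => ⟨hx.1.trans hxy, ?_⟩, fun hy => ⟨?_, hxy.trans_lt hy.2⟩⟩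
  · exact not_le.1 fun hry => hxyD r hr ⟨hx.2, hry⟩
  · exact not_lt.1 fun hxl => hxyD l hl ⟨hxl, hy.1⟩

lemma IsCellUnion.exists_Ico_subset (hE : IsCellUnion D E) (hD : D.Finite) (hl : l ∈ D)
    (hr : r ∈ D) (hEX : E ⊆ Ico l r) (hne : E.Nonempty) :
    ∃ u ∈ D, ∃ v ∈ D, u < v ∧ Ico u v ⊆ E := by
  obtain ⟨z, hz⟩ := hne
  obtain ⟨u, ⟨hu, huz⟩, hmax⟩ := Set.exists_max_image {t ∈ D | t ≤ z} id (hD.subset fun _ h => h.1)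
    ⟨l, hl, (hEX hz).1⟩
  obtain ⟨v, ⟨hv, hzv⟩, hmin⟩ := Set.exists_min_image {t ∈ D | z < t} id (hD.subset fun _ h => h.1)
    ⟨r, hr, (hEX hz).2⟩
  refine ⟨u, hu, v, hv, huz.trans_lt hzv, fun w hw => ?_⟩
  rcases le_total z w with hzw | hwz
  · exact (hE z w hzw fun t ht htw => (hmin t ⟨ht, htw.1⟩).not_gt (htw.2.trans_lt hw.2)).1 hz
  · exact (hE w z hwz fun t ht htw => (hmax t ⟨ht, htw.2⟩).not_gt (hw.1.trans_lt htw.1)).2 hz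

/-- Between two frontier points the set is relatively clopen in a connected interval, and
right-local constancy carries membership over to the left endpoint. -/
lemma isCellUnion_frontier (hE : ∀ x, ∀ᶠ y in 𝓝[≥] x, (y ∈ E ↔ x ∈ E)) :
    IsCellUnion (frontier E) E := by
  intro x y hxy hxyD
  rcases hxy.eq_or_lt with rfl | hxy
  · exact Iff.rfl
  have hcover : Ioc x y ⊆ interior E ∪ interior Eᶜ := fun w hw => by
    by_contra h
    simp only [mem_union, interior_compl, mem_compl_iff, not_or, not_not] at h
    exact hxyD w ⟨h.2, h.1⟩ hw
  have hsame : ∀ w ∈ Ioc x y, (w ∈ E ↔ y ∈ E) := by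
    rcases isPreconnected_Ioc.subset_or_subset isOpen_interior isOpen_interior
      (disjoint_compl_right.mono interior_subset interior_subset) hcover with h | h
    · exact fun w hw => iff_of_true (interior_subset (h hw)) (interior_subset (h ⟨hxy, le_rfl⟩))
    · exact fun w hw => iff_of_false (interior_subset (h hw)) (interior_subset (h ⟨hxy, le_rfl⟩))
  have hright : ∀ᶠ w in 𝓝[>] x, w ∈ Ioc x y ∧ (w ∈ E ↔ x ∈ E) :=
    Filter.Eventually.and (Ioc_mem_nhdsGT hxy) (nhdsWithin_mono x Ioi_subset_Ici_self (hE x))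
  obtain ⟨w, hw, hwx⟩ := hright.exists
  exact hwx.symm.trans (hsame w hw)

lemma eventually_mem_Ico_iff (a b x : ℝ) : ∀ᶠ y in 𝓝[≥] x, (y ∈ Ico a b ↔ x ∈ Ico a b) := by
  rcases lt_or_ge x a with hxa | hax
  · filter_upwards [nhdsWithin_le_nhds (Iio_mem_nhds hxa)] with y hy
    exact iff_of_false (fun h => (not_le.2 hy) h.1) fun h => (not_le.2 hxa) h.1
  rcases lt_or_ge x b with hxb | hbx
  · filter_upwards [Ico_mem_nhdsGE hxb] with y hy
    exact iff_of_true ⟨hax.trans hy.1, hy.2⟩ ⟨hax, hxb⟩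
  · filter_upwards [self_mem_nhdsWithin] with y (hy : x ≤ y)
    exact iff_of_false (fun h => (not_lt.2 (hbx.trans hy)) h.2) fun h => (not_lt.2 hbx) h.2

lemma frontier_iUnion_Ico_subset {ι : Type*} [Finite ι] (a b : ι → ℝ) :
    frontier (⋃ j, Ico (a j) (b j)) ⊆ range a ∪ range b := by
  intro z hz
  rw [frontier, closure_iUnion_of_finite, Set.mem_sdiff, mem_iUnion] at hz
  obtain ⟨⟨j, hj⟩, hint⟩ := hz
  have hzj := closure_minimal Ico_subset_Icc_self isClosed_Icc hj
  have hIoo : z ∉ Ioo (a j) (b j) := fun h => hint <|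
    interior_maximal (Ioo_subset_Ico_self.trans (subset_iUnion (fun j => Ico (a j) (b j)) j))
      isOpen_Ioo h
  rcases hzj.1.eq_or_lt with h | h
  · exact Or.inl ⟨j, h⟩
  · exact Or.inr ⟨j, (hzj.2.eq_or_lt.resolve_right fun h' => hIoo ⟨h, h'⟩).symm⟩

end Cells

lemma csInf_mem_frontier {α : Type*} [ConditionallyCompleteLinearOrder α] [TopologicalSpace α]
    [OrderTopology α] [DenselyOrdered α] [NoMinOrder α] {S : Set α} (hne : S.Nonempty)
    (hbdd : BddBelow S) : sInf S ∈ frontier S := by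
  rw [frontier_eq_closure_inter_closure]
  have hIio : Iio (sInf S) ⊆ Sᶜ := fun z hz hzS => not_le.2 hz (csInf_le hbdd hzS)
  refine ⟨csInf_mem_closure hne hbdd, closure_mono hIio ?_⟩
  rw [closure_Iio]
  exact self_mem_Iic

lemma csSup_mem_frontier {α : Type*} [ConditionallyCompleteLinearOrder α] [TopologicalSpace α]
    [OrderTopology α] [DenselyOrdered α] [NoMaxOrder α] {S : Set α} (hne : S.Nonempty)
    (hbdd : BddAbove S) : sSup S ∈ frontier S :=
  csInf_mem_frontier (α := αᵒᵈ) hne hbdd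

section UnionOfIntervals

variable {d : ℤ} {l r : ℝ} {S : Set ℝ}

lemma MemA.exists_Ico_subset (hS : MemA d l r S) : ∃ a b, a < b ∧ Ico a b ⊆ S := by
  obtain ⟨⟨z, hz⟩, -, k, a, b, hab, rfl⟩ := hS
  obtain ⟨j, -⟩ := mem_iUnion.1 hz
  exact ⟨a j, b j, (hab j).2.2, subset_iUnion (fun j => Ico (a j) (b j)) j⟩

lemma MemA.measurableSet (hS : MemA d l r S) : MeasurableSet S := by
  obtain ⟨-, -, k, a, b, -, rfl⟩ := hS
  exact MeasurableSet.iUnion fun j => measurableSet_Ico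

lemma MemA.volume_toReal_pos (hS : MemA d l r S) : 0 < (volume S).toReal := by
  obtain ⟨a, b, hab, hsub⟩ := hS.exists_Ico_subset
  refine ENNReal.toReal_pos (ne_of_gt ?_) ((measure_mono hS.2.1).trans_lt measure_Ico_lt_top).ne
  exact (by simpa [Real.volume_Ico] using hab : 0 < volume (Ico a b)).trans_le (measure_mono hsub)

lemma MemA.isCellUnion_frontier (hS : MemA d l r S) : IsCellUnion (frontier S) S := by
  obtain ⟨-, -, k, a, b, -, rfl⟩ := hS
  refine isCellUnion_frontier fun x => ?_
  filter_upwards [Filter.eventually_all.2 fun j => eventually_mem_Ico_iff (a j) (b j) x]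
    with y hy
  simp only [mem_iUnion]
  exact exists_congr hy

lemma MemA.frontier_subset_zsdBall (hS : MemA d l r S) :
    frontier S ⊆ zsdBall d (PsiSet d S) := by
  obtain ⟨-, -, k, a, b, hab, rfl⟩ := hS
  have hsub := frontier_iUnion_Ico_subset a b
  have hfin : (frontier (⋃ j, Ico (a j) (b j))).Finite :=
    ((Set.finite_range a).union (Set.finite_range b)).subset hsub
  intro t ht
  have htZ : t ∈ Zsd d := by
    rcases hsub ht with ⟨j, rfl⟩ | ⟨j, rfl⟩
    exacts [(hab j).1, (hab j).2.1]
  exact zsdBall_mono (le_csSup (hfin.image _).bddAbove ⟨t, ht, rfl⟩) (mem_zsdBall_psiNum htZ)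

lemma MemA.one_le_psiSet (hS : MemA d l r S) : 1 ≤ PsiSet d S := by
  obtain ⟨a, b, hab, hsub⟩ := hS.exists_Ico_subset
  by_contra h0
  have hzero : ∀ t ∈ frontier S, t = 0 := fun t ht => by
    have := hS.frontier_subset_zsdBall ht
    rw [Nat.lt_one_iff.1 (not_le.1 h0)] at this
    exact eq_zero_of_mem_zsdBall_zero this
  have ha : a ∈ S := hsub ⟨le_rfl, hab⟩
  have hmid : (a + b) / 2 ∈ S := hsub ⟨by linarith, by linarith⟩
  have hbb : BddBelow S := ⟨l, fun z hz => (hS.2.1 hz).1⟩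
  have hba : BddAbove S := ⟨r, fun z hz => (hS.2.1 hz).2.le⟩
  have hlt : sInf S < sSup S :=
    (csInf_le hbb ha).trans_lt ((by linarith : a < (a + b) / 2).trans_le (le_csSup hba hmid))
  linarith [hzero _ (csInf_mem_frontier ⟨a, ha⟩ hbb), hzero _ (csSup_mem_frontier ⟨a, ha⟩ hba)]

end UnionOfIntervals

lemma add_mul_le_mul_exp_sum {a b : ℝ} (ha : 0 < a) (hb : 0 ≤ b) (N : ℕ) :
    a + N * b ≤ a * Real.exp (b * ∑ k ∈ Finset.range N, 1 / (a + k * b)) := by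
  induction N with
  | zero => simp
  | succ N ih =>
    have hpos : 0 < a + N * b := by positivity
    calc a + (N + 1 : ℕ) * b = (a + N * b) * (b / (a + N * b) + 1) := by
          field_simp; push_cast; ring
      _ ≤ a * Real.exp (b * ∑ k ∈ Finset.range N, 1 / (a + k * b)) *
          Real.exp (b / (a + N * b)) :=
          mul_le_mul ih (Real.add_one_le_exp _) (by positivity) (by positivity)
      _ = a * Real.exp (b * ∑ k ∈ Finset.range (N + 1), 1 / (a + k * b)) := by
          rw [mul_assoc, ← Real.exp_add, Finset.sum_range_succ]; ring_nf

lemma sum_sub_le_of_pairwiseDisjoint {ι : Type*} {t : Finset ι} {u v : ι → ℝ} {l r : ℝ}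
    (hlr : l ≤ r) (huv : ∀ i ∈ t, u i ≤ v i) (hsub : ∀ i ∈ t, Ico (u i) (v i) ⊆ Ico l r)
    (hdisj : (t : Set ι).PairwiseDisjoint fun i => Ico (u i) (v i)) :
    ∑ i ∈ t, (v i - u i) ≤ r - l := by
  have h : ENNReal.ofReal (∑ i ∈ t, (v i - u i)) ≤ ENNReal.ofReal (r - l) := by
    rw [ENNReal.ofReal_sum_of_nonneg fun i hi => sub_nonneg.2 (huv i hi)]
    simp_rw [← Real.volume_Ico]
    rw [← measure_biUnion_finset hdisj fun i _ => measurableSet_Ico]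
    exact measure_mono (iUnion₂_subset hsub)
  exact (ENNReal.ofReal_le_ofReal_iff (sub_nonneg.2 hlr)).1 h

section Recurrence

variable {α : Type*} {T : Equiv.Perm α} {X S : Set α} {N : ℕ}

def ReturnsWithin (T : Equiv.Perm α) (S : Set α) (N : ℕ) : Prop :=
  ∀ z ∈ S, ∃ j, 1 ≤ j ∧ j ≤ N ∧ (T ^ j) z ∈ S

lemma ReturnsWithin.image_pow_subset (h : ReturnsWithin T S N) :
    ⇑(T ^ N) '' S ⊆ ⋃ i ∈ Finset.range N, ⇑(T ^ i) '' S := by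
  rintro _ ⟨z, hz, rfl⟩
  obtain ⟨j, hj1, hjN, hjS⟩ := h z hz
  refine mem_biUnion (Finset.mem_range.2 (by omega : N - j < N)) ⟨_, hjS, ?_⟩
  rw [← Equiv.Perm.mul_apply, ← pow_add, Nat.sub_add_cancel hjN]

lemma ReturnsWithin.exists_pow_mem_of_le (h : ReturnsWithin T S N) (hN : 1 ≤ N) (m : ℕ) :
    ∀ z ∈ S, ∃ j, m ≤ j ∧ j < m + N ∧ (T ^ j) z ∈ S := by
  induction m with
  | zero => exact fun z hz => ⟨0, le_rfl, by omega, hz⟩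
  | succ m ih =>
    intro z hz
    obtain ⟨j, hmj, hjm, hjS⟩ := ih z hz
    rcases hmj.eq_or_lt with rfl | hmj
    · obtain ⟨j', hj'1, hj'N, hj'S⟩ := h _ hjS
      refine ⟨j' + m, by omega, by omega, ?_⟩
      rwa [pow_add, Equiv.Perm.mul_apply]
    · exact ⟨j, hmj, by omega, hjS⟩

lemma ReturnsWithin.image_pow_subset_inv (h : ReturnsWithin T S N) (hN : 1 ≤ N) :
    ⇑(T ^ N) '' S ⊆ ⋃ i ∈ Finset.range N, ⇑(T⁻¹ ^ i) '' S := by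
  rintro _ ⟨z, hz, rfl⟩
  obtain ⟨j, hNj, hj2N, hjS⟩ := h.exists_pow_mem_of_le hN N z hz
  refine mem_biUnion (Finset.mem_range.2 (by omega : j - N < N)) ⟨_, hjS, ?_⟩
  rw [inv_pow, Equiv.Perm.inv_eq_iff_eq, ← Equiv.Perm.mul_apply, ← pow_add,
    Nat.sub_add_cancel hNj]

lemma ReturnsWithin.rhoPlusSet_le {T : Equiv.Perm ℝ} {S : Set ℝ} (h : ReturnsWithin T S N)
    (hN : 1 ≤ N) : rhoPlusSet T S ≤ N :=
  Nat.sInf_le ⟨hN, h.image_pow_subset⟩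

lemma ReturnsWithin.rhoMinusSet_le {T : Equiv.Perm ℝ} {S : Set ℝ} (h : ReturnsWithin T S N)
    (hN : 1 ≤ N) : rhoMinusSet T S ≤ N :=
  Nat.sInf_le ⟨hN, h.image_pow_subset_inv hN⟩

def firstHitSet (T : Equiv.Perm α) (X S : Set α) (k : ℕ) : Set α :=
  {z ∈ X | (T ^ k) z ∈ S ∧ ∀ j, 1 ≤ j → j < k → (T ^ j) z ∉ S}

lemma disjoint_firstHitSet {k k' : ℕ} (hk : 1 ≤ k) (hk' : 1 ≤ k') (hkk' : k ≠ k') :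
    Disjoint (firstHitSet T X S k) (firstHitSet T X S k') := by
  rw [Set.disjoint_left]
  rintro z ⟨-, hkS, hbefore⟩ ⟨-, hk'S, hbefore'⟩
  rcases hkk'.lt_or_gt with h | h
  · exact hbefore' k hk h hkS
  · exact hbefore k' hk' h hk'S

lemma pow_sub_mem_firstHitSet (hX : MapsTo T X X) {x : α} (hx : x ∈ X) {R k : ℕ}
    (hRS : (T ^ R) x ∈ S) (hfirst : ∀ j, 1 ≤ j → j < R → (T ^ j) x ∉ S) (hkR : k ≤ R) :
    (T ^ (R - k)) x ∈ firstHitSet T X S k := by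
  have hpow : ∀ j, (T ^ j) ((T ^ (R - k)) x) = (T ^ (j + (R - k))) x := fun j => by
    rw [pow_add, Equiv.Perm.mul_apply]
  refine ⟨hX.iterate (R - k) hx, ?_, fun j hj1 hjk => ?_⟩
  · rwa [hpow, Nat.add_sub_cancel' hkR]
  · rw [hpow]; exact hfirst _ (by omega) (by omega)

lemma sigmaMinusSet_eq_sigmaPlusSet (T : Equiv.Perm ℝ) (S : Set ℝ) :
    sigmaMinusSet T S = sigmaPlusSet T S := by
  unfold sigmaMinusSet sigmaPlusSet
  congr 1
  ext n
  refine and_congr_right fun _ => ⟨?_, ?_⟩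
  · rintro ⟨_, ⟨z, hz, rfl⟩, hz'⟩
    exact ⟨z, ⟨_, hz', by simp [inv_pow]⟩, hz⟩
  · rintro ⟨_, ⟨z, hz, rfl⟩, hz'⟩
    exact ⟨z, ⟨_, hz', by simp [inv_pow]⟩, hz⟩

end Recurrence

lemma sigmaPlusSet_mul_le {T : Equiv.Perm ℝ} {l r : ℝ} {S : Set ℝ}
    (hμ : MeasurePreserving T (volume.restrict (Ico l r)) (volume.restrict (Ico l r)))
    (hlr : l ≤ r) (hSm : MeasurableSet S) (hSX : S ⊆ Ico l r) :
    (sigmaPlusSet T S : ℝ) * (volume S).toReal ≤ r - l := by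
  by_contra h
  have hvol : volume.restrict (Ico l r) univ <
      sigmaPlusSet T S * volume.restrict (Ico l r) S := by
    rw [Measure.restrict_apply_univ, Real.volume_Ico, Measure.restrict_apply hSm,
      inter_eq_left.2 hSX, ← ENNReal.ofReal_toReal ((measure_mono hSX).trans_lt
        measure_Ico_lt_top).ne, ← ENNReal.ofReal_natCast, ← ENNReal.ofReal_mul (Nat.cast_nonneg _),
      ENNReal.ofReal_lt_ofReal_iff']
    exact ⟨not_le.1 h, (sub_nonneg.2 hlr).trans_lt (not_le.1 h)⟩
  obtain ⟨x, hx, m, hm, hmx⟩ :=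
    hμ.exists_mem_iterate_mem_of_measure_univ_lt_mul_measure hSm.nullMeasurableSet hvol
  have hmem : m ∈ {n : ℕ | 1 ≤ n ∧ (⇑(T ^ n) '' S ∩ S).Nonempty} :=
    ⟨hm.1, (T ^ m) x, ⟨x, hx, rfl⟩, hmx⟩
  exact (Nat.sInf_le hmem).not_gt hm.2

section CellRecurrence

variable {T : Equiv.Perm ℝ} {l r : ℝ} {S : Set ℝ} {D : ℕ → Set ℝ}

lemma isCellUnion_firstHitSet (hDmono : Monotone D) (hl : l ∈ D 0) (hr : r ∈ D 0)
    (hcell : ∀ j, IsCellUnion (D j) (⇑(T ^ j) ⁻¹' S)) (k : ℕ) :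
    IsCellUnion (D k) (firstHitSet T (Ico l r) S k) := by
  intro x y hxy hxyD
  have key : ∀ j ≤ k, ((T ^ j) x ∈ S ↔ (T ^ j) y ∈ S) := fun j hj =>
    hcell j x y hxy fun t ht => hxyD t (hDmono hj ht)
  have hIco := isCellUnion_Ico (hDmono (Nat.zero_le k) hl) (hDmono (Nat.zero_le k) hr) x y hxy hxyD
  simp only [firstHitSet, mem_ofPred_eq]
  rw [hIco, key k le_rfl]
  exact and_congr_right' <| and_congr_right' <| forall_congr' fun j =>
    imp_congr_right fun _ => imp_congr_right fun hj => not_congr (key j hj.le)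

lemma isCellUnion_setOf_forall_pow_notMem (hDmono : Monotone D)
    (hcell : ∀ j, IsCellUnion (D j) (⇑(T ^ j) ⁻¹' S)) (N : ℕ) :
    IsCellUnion (D N) {y ∈ S | ∀ j, 1 ≤ j → j ≤ N → (T ^ j) y ∉ S} := by
  intro x y hxy hxyD
  have key : ∀ j ≤ N, ((T ^ j) x ∈ S ↔ (T ^ j) y ∈ S) := fun j hj =>
    hcell j x y hxy fun t ht => hxyD t (hDmono hj ht)
  simp only [mem_ofPred_eq]
  rw [show (x ∈ S ↔ y ∈ S) by simpa using key 0 (Nat.zero_le N)]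
  exact and_congr_right' <| forall_congr' fun j =>
    imp_congr_right fun _ => imp_congr_right fun hj => not_congr (key j hj)

/-- Poincaré recurrence, applied to a cell of the set of points of `S` that do not come back
within `N` steps. -/
lemma exists_first_return_gt
    (hμ : MeasurePreserving T (volume.restrict (Ico l r)) (volume.restrict (Ico l r)))
    (hSX : S ⊆ Ico l r) (hD : ∀ k, (D k).Finite) (hDmono : Monotone D) (hl : l ∈ D 0)
    (hr : r ∈ D 0) (hcell : ∀ j, IsCellUnion (D j) (⇑(T ^ j) ⁻¹' S))
    {z : ℝ} {N : ℕ} (hz : z ∈ S) (hN : ∀ j, 1 ≤ j → j ≤ N → (T ^ j) z ∉ S) :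
    ∃ x ∈ Ico l r, ∃ R, N < R ∧ (T ^ R) x ∈ S ∧ ∀ j, 1 ≤ j → j < R → (T ^ j) x ∉ S := by
  obtain ⟨u, -, v, -, huv, hU⟩ :=
    (isCellUnion_setOf_forall_pow_notMem hDmono hcell N).exists_Ico_subset (hD N)
      (hDmono (Nat.zero_le N) hl) (hDmono (Nat.zero_le N) hr) (fun y hy => hSX hy.1) ⟨z, hz, hN⟩
  have huvX : Ico u v ⊆ Ico l r := fun y hy => hSX (hU hy).1
  have hμuv : volume.restrict (Ico l r) (Ico u v) ≠ 0 := by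
    rw [Measure.restrict_apply measurableSet_Ico, inter_eq_left.2 huvX, Real.volume_Ico]
    simpa using huv
  obtain ⟨x, hx, m, hm0, hmx⟩ :=
    hμ.exists_mem_iterate_mem measurableSet_Ico.nullMeasurableSet hμuv
  have hret : ∃ R, 1 ≤ R ∧ (T ^ R) x ∈ S := ⟨m, Nat.one_le_iff_ne_zero.2 hm0, (hU hmx).1⟩
  classical
  refine ⟨x, huvX hx, Nat.find hret, not_le.1 fun hle => ?_, (Nat.find_spec hret).2,
    fun j hj1 hjR hjS => Nat.find_min hret hjR ⟨hj1, hjS⟩⟩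
  exact (hU hx).2 _ (Nat.find_spec hret).1 hle (Nat.find_spec hret).2

/-- The first-hit sets of levels `1, …, N` are nonempty by `exists_first_return_gt`; each
contains a cell of the corresponding partition, and these disjoint cells fit in `[l, r)`. -/
theorem sum_le_of_forall_pow_notMem
    (hμ : MeasurePreserving T (volume.restrict (Ico l r)) (volume.restrict (Ico l r)))
    (hX : MapsTo T (Ico l r) (Ico l r)) (hSX : S ⊆ Ico l r) (hD : ∀ k, (D k).Finite)
    (hDmono : Monotone D) (hl : l ∈ D 0) (hr : r ∈ D 0)
    (hcell : ∀ j, IsCellUnion (D j) (⇑(T ^ j) ⁻¹' S)) {g : ℕ → ℝ}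
    (hgap : ∀ k, ∀ u ∈ D k, ∀ v ∈ D k, u < v → g k ≤ v - u) {z : ℝ} {N : ℕ} (hz : z ∈ S)
    (hN : ∀ j, 1 ≤ j → j ≤ N → (T ^ j) z ∉ S) :
    ∑ k ∈ Finset.range N, g (k + 1) ≤ r - l := by
  obtain ⟨x, hxX, R, hNR, hRS, hfirst⟩ := exists_first_return_gt hμ hSX hD hDmono hl hr hcell hz hN
  have hcells : ∀ k ∈ Finset.range N, ∃ u ∈ D (k + 1), ∃ v ∈ D (k + 1), u < v ∧
      Ico u v ⊆ firstHitSet T (Ico l r) S (k + 1) := fun k hk =>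
    (isCellUnion_firstHitSet hDmono hl hr hcell (k + 1)).exists_Ico_subset (hD _)
      (hDmono (Nat.zero_le _) hl) (hDmono (Nat.zero_le _) hr) (fun y hy => hy.1)
      ⟨_, pow_sub_mem_firstHitSet hX hxX hRS hfirst (by have := Finset.mem_range.1 hk; omega)⟩
  choose! u hu v hv huv hsub using hcells
  calc ∑ k ∈ Finset.range N, g (k + 1) ≤ ∑ k ∈ Finset.range N, (v k - u k) :=
        Finset.sum_le_sum fun k hk => hgap _ _ (hu k hk) _ (hv k hk) (huv k hk)
    _ ≤ r - l := by
      refine sum_sub_le_of_pairwiseDisjoint ((hSX hz).1.trans (hSX hz).2.le)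
        (fun k hk => (huv k hk).le) (fun k hk => (hsub k hk).trans fun y hy => hy.1) ?_
      intro i hi j hj hij
      exact (disjoint_firstHitSet (by omega) (by omega) (by simpa using hij)).mono
        (hsub i hi) (hsub j hj)

end CellRecurrence

section IntervalExchange

variable {s : ℕ} {l r : ℝ} {len : Fin s → ℝ} {π : Equiv.Perm (Fin s)} {T : Equiv.Perm ℝ}

lemma sepPt_add_len (l : ℝ) (len : Fin s → ℝ) (i : Fin s) :
    sepPt l len i + len i = l + ∑ j ∈ Finset.univ.filter (· ≤ i), len j := by
  rw [sepPt, add_assoc, show Finset.univ.filter (· ≤ i) = insert i (Finset.univ.filter (· < i))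
    by ext j; simp [le_iff_lt_or_eq, or_comm], Finset.sum_insert (by simp), add_comm (len i)]

lemma sepPt_add_len_le_sepPt (hpos : ∀ i, 0 < len i) {i j : Fin s} (hij : i < j) :
    sepPt l len i + len i ≤ sepPt l len j := by
  rw [sepPt_add_len, sepPt]
  gcongr
  exact fun k _ _ => (hpos k).le

lemma IsIET.apply_of_notMem (hT : IsIET s l r len π T) {z : ℝ} (hz : z ∉ Ico l r) : T z = z :=
  hT.2.2.2.1 z hz

lemma IsIET.apply_of_mem_tile (hT : IsIET s l r len π T) {i : Fin s} {z : ℝ}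
    (hz : z ∈ Ico (sepPt l len i) (sepPt l len i + len i)) :
    T z = z + (imgPt l len π i - sepPt l len i) :=
  hT.2.2.2.2 i z hz

lemma IsIET.tile_subset (hT : IsIET s l r len π T) (i : Fin s) :
    Ico (sepPt l len i) (sepPt l len i + len i) ⊆ Ico l r := by
  refine Ico_subset_Ico (le_add_of_nonneg_right (Finset.sum_nonneg fun j _ => (hT.2.1 j).le)) ?_
  rw [sepPt_add_len, ← sub_nonneg, show r = l + ∑ j, len j by linarith [hT.2.2.1]]
  simp only [add_sub_add_left_eq_sub, sub_nonneg]
  exact Finset.sum_le_univ_sum_of_nonneg fun j => (hT.2.1 j).le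

lemma IsIET.disjoint_tile (hT : IsIET s l r len π T) {i j : Fin s} (hij : i ≠ j) :
    Disjoint (Ico (sepPt l len i) (sepPt l len i + len i))
      (Ico (sepPt l len j) (sepPt l len j + len j)) := by
  rcases hij.lt_or_gt with h | h
  · exact Ico_disjoint_Ico_same.mono_left (Ico_subset_Ico_right (sepPt_add_len_le_sepPt hT.2.1 h))
  · exact (Ico_disjoint_Ico_same.mono_left
      (Ico_subset_Ico_right (sepPt_add_len_le_sepPt hT.2.1 h))).symm

lemma IsIET.exists_mem_tile (hT : IsIET s l r len π T) {z : ℝ} (hz : z ∈ Ico l r) :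
    ∃ i, z ∈ Ico (sepPt l len i) (sepPt l len i + len i) := by
  have hs : 0 < s := Nat.pos_of_ne_zero fun hs => by
    subst hs; linarith [hT.1, hT.2.2.1, Fin.sum_univ_zero len]
  have h0 : sepPt l len ⟨0, hs⟩ ≤ z := by
    rw [sepPt, Finset.filter_false_of_mem fun k _ =>
      show ¬ k < ⟨0, hs⟩ from Nat.not_lt_zero _]
    simpa using hz.1
  obtain ⟨i, hiz, hmax⟩ := Set.exists_max_image {i : Fin s | sepPt l len i ≤ z} id
    (Set.toFinite _) ⟨⟨0, hs⟩, h0⟩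
  refine ⟨i, hiz, not_le.1 fun hle => ?_⟩
  rcases lt_or_ge ((i : ℕ) + 1) s with h | h
  · have hnext : sepPt l len ⟨i + 1, h⟩ = sepPt l len i + len i := by
      rw [sepPt_add_len, sepPt]
      congr 2
      ext k
      simp only [Finset.mem_filter, Finset.mem_univ, true_and, Fin.lt_def, Fin.le_def]
      omega
    have := hmax ⟨i + 1, h⟩ (show sepPt l len ⟨i + 1, h⟩ ≤ z by rw [hnext]; exact hle)
    exact absurd (Fin.le_def.1 this) (by simp)
  · have hlast : sepPt l len i + len i = r := by
      rw [sepPt_add_len, Finset.filter_true_of_mem fun k _ => Fin.le_def.2 (by omega)]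
      linarith [hT.2.2.1]
    linarith [hz.2]

lemma IsIET.mapsTo (hT : IsIET s l r len π T) : MapsTo T (Ico l r) (Ico l r) := fun z hz => by
  by_contra h
  rw [T.injective (hT.apply_of_notMem h)] at h
  exact h hz

lemma IsIET.image_Ico (hT : IsIET s l r len π T) : ⇑T '' Ico l r = Ico l r := by
  refine hT.mapsTo.image_subset.antisymm fun z hz => ⟨T.symm z, ?_, T.apply_symm_apply z⟩
  by_contra h
  exact h (by rwa [← hT.apply_of_notMem h, T.apply_symm_apply])

lemma IsIET.pow_apply_of_notMem (hT : IsIET s l r len π T) {z : ℝ} (hz : z ∉ Ico l r) (n : ℕ) :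
    (T ^ n) z = z := by
  induction n with
  | zero => rfl
  | succ n ih => rw [pow_succ, Equiv.Perm.mul_apply, hT.apply_of_notMem hz, ih]

lemma IsIET.preimage_pow_subset (hT : IsIET s l r len π T) {E : Set ℝ} (hE : E ⊆ Ico l r)
    (n : ℕ) : ⇑(T ^ n) ⁻¹' E ⊆ Ico l r := fun z hz => by
  by_contra h
  exact h (hE (hT.pow_apply_of_notMem h n ▸ hz))

lemma IsIET.iUnion_tile (hT : IsIET s l r len π T) :
    ⋃ i, Ico (sepPt l len i) (sepPt l len i + len i) = Ico l r :=
  (iUnion_subset hT.tile_subset).antisymm fun _ hz => mem_iUnion.2 (hT.exists_mem_tile hz)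

lemma IsIET.preimage_inter_Ico (hT : IsIET s l r len π T) (B : Set ℝ) :
    ⇑T ⁻¹' B ∩ Ico l r = ⋃ i, (· + (imgPt l len π i - sepPt l len i)) ⁻¹' B ∩
      Ico (sepPt l len i) (sepPt l len i + len i) := by
  rw [← hT.iUnion_tile, inter_iUnion]
  refine iUnion_congr fun i => ?_
  ext z
  exact and_congr_left fun hz => by rw [mem_preimage, hT.apply_of_mem_tile hz]; rfl

lemma IsIET.image_tile (hT : IsIET s l r len π T) (i : Fin s) :
    ⇑T '' Ico (sepPt l len i) (sepPt l len i + len i) =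
      Ico (sepPt l len i + (imgPt l len π i - sepPt l len i))
        (sepPt l len i + len i + (imgPt l len π i - sepPt l len i)) := by
  rw [← image_add_const_Ico]
  exact image_congr fun z hz => hT.apply_of_mem_tile hz

lemma IsIET.measurable (hT : IsIET s l r len π T) : Measurable T := fun B hB => by
  have hout : ⇑T ⁻¹' B \ Ico l r = B \ Ico l r := by
    ext z
    exact and_congr_left fun hz => by rw [mem_preimage, hT.apply_of_notMem hz]
  rw [← inter_union_sdiff (⇑T ⁻¹' B) (Ico l r), hT.preimage_inter_Ico, hout]
  exact (MeasurableSet.iUnion fun i => (measurable_add_const _ hB).inter measurableSet_Ico).union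
    (hB.diff measurableSet_Ico)

lemma IsIET.measurePreserving (hT : IsIET s l r len π T) :
    MeasurePreserving T (volume.restrict (Ico l r)) (volume.restrict (Ico l r)) := by
  refine ⟨hT.measurable, Measure.ext fun B hB => ?_⟩
  have hshift : ∀ i, (· + (imgPt l len π i - sepPt l len i)) ⁻¹' B ∩
      Ico (sepPt l len i) (sepPt l len i + len i) = (· + (imgPt l len π i - sepPt l len i)) ⁻¹'
        (B ∩ ⇑T '' Ico (sepPt l len i) (sepPt l len i + len i)) := fun i => by
    rw [hT.image_tile, preimage_inter, preimage_add_const_Ico, add_sub_cancel_right,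
      add_sub_cancel_right]
  rw [Measure.map_apply hT.measurable hB, Measure.restrict_apply (hT.measurable hB),
    Measure.restrict_apply hB, hT.preimage_inter_Ico, measure_iUnion
      (fun i j hij => (hT.disjoint_tile hij).mono inter_subset_right inter_subset_right)
      fun i => (measurable_add_const _ hB).inter measurableSet_Ico]
  simp_rw [hshift, measure_preimage_add_right]
  rw [← measure_iUnion (fun i j hij => ((disjoint_image_iff T.injective).2
      (hT.disjoint_tile hij)).mono inter_subset_right inter_subset_right)
      fun i => hB.inter (hT.image_tile i ▸ measurableSet_Ico),
    ← inter_iUnion, ← image_iUnion, hT.iUnion_tile, hT.image_Ico]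

lemma IsIET.isCellUnion_preimage (hT : IsIET s l r len π T) {D D' E : Set ℝ} (hl : l ∈ D')
    (hr : r ∈ D') (hsep : ∀ i, sepPt l len i ∈ D')
    (hshift : ∀ i, ∀ t ∈ D, t - (imgPt l len π i - sepPt l len i) ∈ D')
    (hE : IsCellUnion D E) (hEX : E ⊆ Ico l r) : IsCellUnion D' (⇑T ⁻¹' E) := by
  intro x y hxy hxyD
  by_cases hx : x ∈ Ico l r <;> by_cases hy : y ∈ Ico l r
  · obtain ⟨i, hxi⟩ := hT.exists_mem_tile hx
    have hyi : y ∈ Ico (sepPt l len i) (sepPt l len i + len i) := by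
      obtain ⟨j, hyj⟩ := hT.exists_mem_tile hy
      obtain rfl | hij := eq_or_ne i j
      · exact hyj
      have hxj : x < sepPt l len j := not_le.1 fun h =>
        Set.disjoint_left.1 (hT.disjoint_tile hij) hxi ⟨h, hxy.trans_lt hyj.2⟩
      exact absurd ⟨hxj, hyj.1⟩ (hxyD _ (hsep j))
    rw [mem_preimage, mem_preimage, hT.apply_of_mem_tile hxi, hT.apply_of_mem_tile hyi]
    refine hE _ _ (by linarith) fun t ht htxy => hxyD _ (hshift i t ht) ?_
    exact ⟨by linarith [htxy.1], by linarith [htxy.2]⟩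
  · exact absurd ⟨hx.2, not_lt.1 fun h => hy ⟨hx.1.trans hxy, h⟩⟩ (hxyD r hr)
  · exact absurd ⟨not_le.1 fun h => hx ⟨h, hxy.trans_lt hy.2⟩, hy.1⟩ (hxyD l hl)
  · rw [mem_preimage, mem_preimage, hT.apply_of_notMem hx, hT.apply_of_notMem hy]
    exact iff_of_false (fun h => hx (hEX h)) fun h => hy (hEX h)

lemma IsIET.isCellUnion_preimage_pow (hT : IsIET s l r len π T) {d : ℤ} {Q A : ℕ}
    (hl : l ∈ zsdBall d Q) (hr : r ∈ zsdBall d Q) (hsep : ∀ i, sepPt l len i ∈ zsdBall d Q)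
    (hα : ∀ i, imgPt l len π i - sepPt l len i ∈ zsdBall d A) {E : Set ℝ}
    (hE : IsCellUnion (zsdBall d Q) E) (hEX : E ⊆ Ico l r) (n : ℕ) :
    IsCellUnion (zsdBall d (Q + n * A)) (⇑(T ^ n) ⁻¹' E) := by
  induction n with
  | zero => simpa using hE
  | succ n ih =>
    have hle : Q ≤ Q + (n + 1) * A := Nat.le_add_right _ _
    rw [pow_succ, Equiv.Perm.coe_mul, preimage_comp]
    refine hT.isCellUnion_preimage (zsdBall_mono hle hl) (zsdBall_mono hle hr)
      (fun i => zsdBall_mono hle (hsep i)) (fun i t ht => ?_) ih (hT.preimage_pow_subset hEX n)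
    rw [add_one_mul, ← add_assoc]
    exact sub_mem_zsdBall ht (hα i)

/-- The exponential comes from summing the lengths `1 / (2 (Q + k A) (1 + √d))` of the cells of
level `k`, the gap between distinct points of `ℤ[√d]` of height `Q + k A`. -/
theorem IsIET.natCast_mul_le_of_forall_pow_notMem (hT : IsIET s l r len π T) {d : ℤ}
    (hirr : Irrational (Real.sqrt d)) {Q A : ℕ} (hA : 0 < A)
    (hl : l ∈ zsdBall d Q) (hr : r ∈ zsdBall d Q) (hsep : ∀ i, sepPt l len i ∈ zsdBall d Q)
    (hα : ∀ i, imgPt l len π i - sepPt l len i ∈ zsdBall d A) {S : Set ℝ}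
    (hS : IsCellUnion (zsdBall d Q) S) (hSX : S ⊆ Ico l r) {z : ℝ} {N : ℕ} (hz : z ∈ S)
    (hN : ∀ j, 1 ≤ j → j ≤ N → (T ^ j) z ∉ S) :
    (N : ℝ) * A ≤ (Q + A) * Real.exp (2 * (1 + Real.sqrt d) * A * (r - l)) := by
  set c : ℝ := 2 * (1 + Real.sqrt d)
  have hc : 0 < c := by positivity
  have hsum := sum_le_of_forall_pow_notMem (D := fun k => zsdBall d (Q + k * A))
    (g := fun k => 1 / (2 * (Q + k * A : ℕ) * (1 + Real.sqrt d))) hT.measurePreserving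
    hT.mapsTo hSX (fun k => finite_zsdBall d _)
    (fun m n hmn => zsdBall_mono (Nat.add_le_add_left (Nat.mul_le_mul_right A hmn) Q))
    (by simpa using hl) (by simpa using hr) (hT.isCellUnion_preimage_pow hl hr hsep hα hS hSX)
    (fun k u hu v hv huv => one_div_le_sub_of_mem_zsdBall hirr hu hv huv) hz hN
  have hterm : ∀ k : ℕ, 1 / (2 * ((Q + (k + 1) * A : ℕ) : ℝ) * (1 + Real.sqrt d)) =
      1 / (c * (Q + A) + k * (c * A)) := fun k => by push_cast; ring
  simp only [hterm] at hsum
  have hmain := add_mul_le_mul_exp_sum (a := c * (Q + A)) (b := c * A) (by positivity)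
    (by positivity) N
  have hexp := Real.exp_le_exp.2 (mul_le_mul_of_nonneg_left hsum (by positivity : 0 ≤ c * A))
  have : c * (N * A) ≤ c * ((Q + A) * Real.exp (c * A * (r - l))) := by
    nlinarith [mul_le_mul_of_nonneg_left hexp (by positivity : 0 ≤ c * (Q + A))]
  exact le_of_mul_le_mul_left this hc

lemma DefinedOverZ.exists_zsdBall {d : ℤ} (h : DefinedOverZ d s l r len π) :
    ∃ B, l ∈ zsdBall d B ∧ r ∈ zsdBall d B ∧ (∀ i, sepPt l len i ∈ zsdBall d B) ∧
      ∀ i, imgPt l len π i - sepPt l len i ∈ zsdBall d B := by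
  obtain ⟨hl, hr, hsep⟩ := h
  obtain ⟨B, hB⟩ := exists_subset_zsdBall (d := d)
    (((Set.toFinite {l, r}).union (Set.finite_range (sepPt l len))).union
      (Set.finite_range fun i => imgPt l len π i - sepPt l len i))
    (union_subset (union_subset (insert_subset hl (singleton_subset_iff.2 hr))
      (range_subset_iff.2 fun i => (hsep i).1)) (range_subset_iff.2 fun i => (hsep i).2))
  exact ⟨B, hB (by simp), hB (by simp), fun i => hB (by simp), fun i => hB (by simp)⟩

theorem IsIET.exists_returnsWithin (hT : IsIET s l r len π T) {d : ℤ}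
    (hirr : Irrational (Real.sqrt d)) {B : ℕ} (hl : l ∈ zsdBall d B) (hr : r ∈ zsdBall d B)
    (hsep : ∀ i, sepPt l len i ∈ zsdBall d B)
    (hα : ∀ i, imgPt l len π i - sepPt l len i ∈ zsdBall d B) {S : Set ℝ} (hS : MemA d l r S) :
    ∃ N, 1 ≤ N ∧ ReturnsWithin T S N ∧ (N : ℝ) ≤
      ((2 * B + 2) * Real.exp (2 * (1 + Real.sqrt d) * (B + 1) * (r - l)) + 1) * PsiSet d S := by
  set K := Real.exp (2 * (1 + Real.sqrt d) * (B + 1) * (r - l))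
  have hK : 0 < K := Real.exp_pos _
  set P := PsiSet d S
  have hP : (1 : ℝ) ≤ P := by exact_mod_cast hS.one_le_psiSet
  have hbound : 0 ≤ (2 * B + 1 + P) * K := by positivity
  refine ⟨⌊(2 * B + 1 + P) * K⌋₊ + 1, Nat.le_add_left 1 _, fun z hz => ?_, ?_⟩
  · by_contra hno
    push Not at hno
    have hQ : zsdBall d B ⊆ zsdBall d (B + P) := zsdBall_mono (Nat.le_add_right B P)
    have hle := hT.natCast_mul_le_of_forall_pow_notMem hirr (Nat.succ_pos B) (hQ hl) (hQ hr)
      (fun i => hQ (hsep i)) (fun i => zsdBall_mono (Nat.le_succ B) (hα i))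
      (hS.isCellUnion_frontier.mono (hS.frontier_subset_zsdBall.trans
        (zsdBall_mono (Nat.le_add_left _ _)))) hS.2.1 hz hno
    have hN := Nat.lt_floor_add_one ((2 * B + 1 + P) * K)
    push_cast at hle
    nlinarith
  · have hfloor := Nat.floor_le hbound
    push_cast
    nlinarith [mul_nonneg (mul_nonneg (by positivity : (0 : ℝ) ≤ 2 * B + 1) hK.le)
      (sub_nonneg.2 hP)]

end IntervalExchange

theorem return_time_bounds_general (d : ℤ) (hd : 2 ≤ d) (hsf : Squarefree d)
    (s : ℕ) (l r : ℝ) (len : Fin s → ℝ) (π : Equiv.Perm (Fin s)) (T : Equiv.Perm ℝ)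
    (hIET : IsIET s l r len π T)
    (hdef : DefinedOverZ d s l r len π) :
    ∃ C : ℝ, 0 < C ∧ ∀ S : Set ℝ, MemA d l r S →
      {n : ℕ | 1 ≤ n ∧ ⇑(T ^ n) '' S ⊆ ⋃ i ∈ Finset.range n, ⇑(T ^ i) '' S}.Nonempty ∧
      {m : ℕ | 1 ≤ m ∧ ⇑(T ^ m) '' S ⊆ ⋃ i ∈ Finset.range m, ⇑(T⁻¹ ^ i) '' S}.Nonempty ∧
      (rhoPlusSet T S : ℝ) ≤ C * (PsiSet d S : ℝ) ∧
      (rhoMinusSet T S : ℝ) ≤ C * (PsiSet d S : ℝ) ∧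
      (sigmaPlusSet T S : ℝ) ≤ C / (volume S).toReal ∧
      (sigmaMinusSet T S : ℝ) ≤ C / (volume S).toReal := by
  obtain ⟨B, hl, hr, hsep, hα⟩ := hdef.exists_zsdBall
  set K := Real.exp (2 * (1 + Real.sqrt d) * (B + 1) * (r - l))
  set C := (2 * B + 2) * K + 1 + (r - l)
  have hrl := sub_pos.2 hIET.1
  refine ⟨C, by positivity, fun S hS => ?_⟩
  obtain ⟨N, hN1, hret, hNP⟩ :=
    hIET.exists_returnsWithin (irrational_sqrt_of_squarefree hd hsf) hl hr hsep hα hS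
  have hNC : (N : ℝ) ≤ C * PsiSet d S :=
    hNP.trans (mul_le_mul_of_nonneg_right (by linarith) (Nat.cast_nonneg _))
  have hσ : (sigmaPlusSet T S : ℝ) ≤ C / (volume S).toReal := by
    rw [le_div_iff₀ hS.volume_toReal_pos]
    refine (sigmaPlusSet_mul_le hIET.measurePreserving hIET.1.le hS.measurableSet hS.2.1).trans ?_
    linarith [show 0 ≤ (2 * B + 2) * K by positivity]
  exact ⟨⟨N, hN1, hret.image_pow_subset⟩, ⟨N, hN1, hret.image_pow_subset_inv hN1⟩,
    (Nat.cast_le.2 (hret.rhoPlusSet_le hN1)).trans hNC,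
    (Nat.cast_le.2 (hret.rhoMinusSet_le hN1)).trans hNC,
    hσ, sigmaMinusSet_eq_sigmaPlusSet T S ▸ hσ⟩

/-- For a minimal interval exchange transformation defined over
`ℤ[√d]` there is `C > 0` such that for every `S ∈ A([l,r))` the maximal return
times exist and satisfy `ρ±(S) ≤ C ⬝ Ψ(S)`, and the minimal return times satisfy
`σ±(S) ≤ C / |S|`. -/
theorem return_time_bounds (d : ℤ) (hd : 2 ≤ d) (hsf : Squarefree d)
    (s : ℕ) (l r : ℝ) (len : Fin s → ℝ) (π : Equiv.Perm (Fin s)) (T : Equiv.Perm ℝ)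
    (hIET : IsIET s l r len π T) (hmin : IsMinimalOn T l r)
    (hdef : DefinedOverZ d s l r len π) :
    ∃ C : ℝ, 0 < C ∧ ∀ S : Set ℝ, MemA d l r S →
      {n : ℕ | 1 ≤ n ∧ ⇑(T ^ n) '' S ⊆ ⋃ i ∈ Finset.range n, ⇑(T ^ i) '' S}.Nonempty ∧
      {m : ℕ | 1 ≤ m ∧ ⇑(T ^ m) '' S ⊆ ⋃ i ∈ Finset.range m, ⇑(T⁻¹ ^ i) '' S}.Nonempty ∧
      (rhoPlusSet T S : ℝ) ≤ C * (PsiSet d S : ℝ) ∧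
      (rhoMinusSet T S : ℝ) ≤ C * (PsiSet d S : ℝ) ∧
      (sigmaPlusSet T S : ℝ) ≤ C / (volume S).toReal ∧
      (sigmaMinusSet T S : ℝ) ≤ C / (volume S).toReal :=
  return_time_bounds_general d hd hsf s l r len π T hIET hdef

end
end
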